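/- There exist constants 0 < c₁ ≤ c₂ depending only on c and θ such that for every x ≥ 2 and every real t with g(Δ₁) ≤ t and t + 1 ≤ g(Δ₂), one has c₁·t^{γ−1} ≤ m(t+1) − m(t) ≤ c₂·t^{γ−1}. -/

import Mathlib

open Real Set

/-!
On `[Δ₁, Δ₂]` the factor `tan (log y)` stays in `[1, 2]`, so both `g y / y ^ c` and
`g' y / y ^ (c - 1)` are bounded above and below by constants, while `Δ₂ ≤ e · Δ₁`. Hence
`g' ≍ y ^ (c - 1) ≍ g ^ (1 - γ)` throughout the interval, and the mean value theorem
`1 = g (m (t + 1)) - g (m t) = g' ξ · (m (t + 1) - m t)` gives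
`m (t + 1) - m t = 1 / g' ξ ≍ t ^ (γ - 1)`.
-/

noncomputable def Δ₁ (x : ℝ) : ℝ :=
  Real.exp (Real.pi * (⌊Real.log x / Real.pi⌋ : ℝ) + Real.arctan 1)

noncomputable def Δ₂ (x : ℝ) : ℝ :=
  Real.exp (Real.pi * (⌊Real.log x / Real.pi⌋ : ℝ) + Real.arctan 2)

noncomputable def g (c θ y : ℝ) : ℝ := y ^ c * Real.tan (Real.log y) ^ θ

theorem exists_mem_Ioo_sub_eq_div_of_hasDerivAt_pos {f f' : ℝ → ℝ} {a b y₁ y₂ : ℝ}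
    (hf : ∀ y ∈ Icc a b, HasDerivAt f (f' y) y) (hf' : ∀ y ∈ Icc a b, 0 < f' y)
    (hy₁ : y₁ ∈ Icc a b) (hy₂ : y₂ ∈ Icc a b) (hlt : f y₁ < f y₂) :
    ∃ ξ ∈ Ioo y₁ y₂, y₂ - y₁ = (f y₂ - f y₁) / f' ξ := by
  have hcont : ContinuousOn f (Icc a b) := fun y hy => (hf y hy).continuousAt.continuousWithinAt
  have hmono : StrictMonoOn f (Icc a b) :=
    strictMonoOn_of_hasDerivWithinAt_pos (convex_Icc a b) hcont
      (fun y hy => (hf y (interior_subset hy)).hasDerivWithinAt)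
      (fun y hy => hf' y (interior_subset hy))
  have hy : y₁ < y₂ := (hmono.lt_iff_lt hy₁ hy₂).1 hlt
  have hsub : Icc y₁ y₂ ⊆ Icc a b := Icc_subset_Icc hy₁.1 hy₂.2
  obtain ⟨ξ, hξ, hslope⟩ := exists_hasDerivAt_eq_slope f f' hy (hcont.mono hsub)
    (fun z hz => hf z (hsub (Ioo_subset_Icc_self hz)))
  refine ⟨ξ, hξ, ?_⟩
  rw [hslope, div_div_cancel₀ (sub_ne_zero.2 hlt.ne')]

theorem tan_mem_Icc_of_mem_Icc_arctan {a b s : ℝ} (hs : s ∈ Icc (arctan a) (arctan b)) :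
    tan s ∈ Icc a b := by
  have mem : ∀ r, arctan r ∈ Ioo (-(π / 2)) (π / 2) :=
    fun r => ⟨neg_pi_div_two_lt_arctan r, arctan_lt_pi_div_two r⟩
  have hs' : s ∈ Ioo (-(π / 2)) (π / 2) := ⟨(mem a).1.trans_le hs.1, hs.2.trans_lt (mem b).2⟩
  constructor
  · simpa only [tan_arctan] using strictMonoOn_tan.monotoneOn (mem a) hs' hs.1
  · simpa only [tan_arctan] using strictMonoOn_tan.monotoneOn hs' (mem b) hs.2

noncomputable def gDeriv (c θ y : ℝ) : ℝ :=
  y ^ (c - 1) * (c * tan (log y) ^ θ + θ * tan (log y) ^ (θ - 1) * (1 + tan (log y) ^ 2))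

theorem hasDerivAt_g {c θ y : ℝ} (hy : 0 < y) (hT : 0 < tan (log y)) :
    HasDerivAt (g c θ) (gDeriv c θ y) y := by
  have hcos : cos (log y) ≠ 0 := fun h => hT.ne' (by rw [tan_eq_sin_div_cos, h, div_zero])
  set T := tan (log y)
  have hpow : HasDerivAt (fun z : ℝ => z ^ c) (c * y ^ (c - 1)) y :=
    hasDerivAt_rpow_const (Or.inl hy.ne')
  have htan : HasDerivAt (fun z => tan (log z)) (1 / cos (log y) ^ 2 * y⁻¹) y :=
    (hasDerivAt_tan hcos).comp y (hasDerivAt_log hy.ne')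
  have htanpow := (hasDerivAt_rpow_const (p := θ) (Or.inl hT.ne')).comp y htan
  have hsec : 1 / cos (log y) ^ 2 = 1 + T ^ 2 := by
    rw [← inv_one_add_tan_sq hcos, one_div, inv_inv]
  have hy' : y ^ c * y⁻¹ = y ^ (c - 1) := by
    rw [rpow_sub hy, rpow_one, div_eq_mul_inv]
  refine (hpow.mul htanpow).congr_deriv ?_
  rw [gDeriv, hsec, Function.comp_apply]
  linear_combination (θ * T ^ (θ - 1) * (1 + T ^ 2)) * hy'

theorem gDeriv_factor_bounds {c θ T : ℝ} (hc : 0 ≤ c) (hθ : 1 ≤ θ) (hT : T ∈ Icc 1 2) :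
    c + 2 * θ ≤ c * T ^ θ + θ * T ^ (θ - 1) * (1 + T ^ 2) ∧
      c * T ^ θ + θ * T ^ (θ - 1) * (1 + T ^ 2) ≤ 2 ^ θ * (c + 5 * θ) := by
  obtain ⟨hT₁, hT₂⟩ := hT
  have h₁ : 1 ≤ T ^ θ := one_le_rpow hT₁ (by linarith)
  have h₂ : T ^ θ ≤ 2 ^ θ := rpow_le_rpow (by linarith) hT₂ (by linarith)
  have h₃ : 1 ≤ T ^ (θ - 1) := one_le_rpow hT₁ (by linarith)
  have h₄ : T ^ (θ - 1) ≤ 2 ^ θ :=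
    (rpow_le_rpow (by linarith) hT₂ (by linarith)).trans
      (rpow_le_rpow_of_exponent_le one_le_two (by linarith))
  have h₅ : 2 ≤ 1 + T ^ 2 := by nlinarith
  have h₆ : 1 + T ^ 2 ≤ 5 := by nlinarith
  constructor
  · nlinarith [mul_le_mul h₃ h₅ zero_le_two (zero_le_one.trans h₃)]
  · nlinarith [mul_le_mul h₄ h₆ (by linarith) (by positivity)]

section Window

variable {c θ x y : ℝ}

theorem pos_of_mem_Icc_Δ (hy : y ∈ Icc (Δ₁ x) (Δ₂ x)) : 0 < y :=
  (exp_pos _).trans_le hy.1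

theorem Δ₂_le_exp_one_mul_Δ₁ : Δ₂ x ≤ exp 1 * Δ₁ x := by
  have h : arctan 2 ≤ 1 + arctan 1 := by
    linarith [arctan_lt_pi_div_two 2, arctan_one, pi_le_four]
  rw [Δ₁, Δ₂, ← exp_add]
  exact exp_le_exp.2 (by linarith)

theorem tan_log_mem_Icc (hy : y ∈ Icc (Δ₁ x) (Δ₂ x)) : tan (log y) ∈ Icc 1 2 := by
  have hy₀ := pos_of_mem_Icc_Δ hy
  set k : ℤ := ⌊log x / π⌋
  have h₁ : π * k + arctan 1 ≤ log y := (le_log_iff_exp_le hy₀).2 hy.1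
  have h₂ : log y ≤ π * k + arctan 2 := (log_le_iff_le_exp hy₀).2 hy.2
  rw [← tan_periodic.sub_int_mul_eq k]
  exact tan_mem_Icc_of_mem_Icc_arctan ⟨by linarith, by linarith⟩

theorem gDeriv_bounds (hc : 0 ≤ c) (hθ : 1 ≤ θ) (hy : y ∈ Icc (Δ₁ x) (Δ₂ x)) :
    (c + 2 * θ) * y ^ (c - 1) ≤ gDeriv c θ y ∧
      gDeriv c θ y ≤ 2 ^ θ * (c + 5 * θ) * y ^ (c - 1) := by
  have hy₀ : 0 ≤ y ^ (c - 1) := rpow_nonneg (pos_of_mem_Icc_Δ hy).le _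
  obtain ⟨hlo, hhi⟩ := gDeriv_factor_bounds hc hθ (tan_log_mem_Icc hy)
  rw [gDeriv, mul_comm _ (y ^ _), mul_comm _ (y ^ _)]
  exact ⟨mul_le_mul_of_nonneg_left hlo hy₀, mul_le_mul_of_nonneg_left hhi hy₀⟩

theorem hasDerivAt_g_of_mem (hy : y ∈ Icc (Δ₁ x) (Δ₂ x)) :
    HasDerivAt (g c θ) (gDeriv c θ y) y :=
  hasDerivAt_g (pos_of_mem_Icc_Δ hy) (zero_lt_one.trans_le (tan_log_mem_Icc hy).1)

theorem gDeriv_pos (hc : 0 ≤ c) (hθ : 1 ≤ θ) (hy : y ∈ Icc (Δ₁ x) (Δ₂ x)) :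
    0 < gDeriv c θ y :=
  (mul_pos (by linarith) (rpow_pos_of_pos (pos_of_mem_Icc_Δ hy) _)).trans_le
    (gDeriv_bounds hc hθ hy).1

theorem g_pos (hy : y ∈ Icc (Δ₁ x) (Δ₂ x)) : 0 < g c θ y :=
  mul_pos (rpow_pos_of_pos (pos_of_mem_Icc_Δ hy) c)
    (rpow_pos_of_pos (zero_lt_one.trans_le (tan_log_mem_Icc hy).1) θ)

theorem g_rpow_bounds (hc : 1 ≤ c) (hθ : 0 ≤ θ)
    (hy : y ∈ Icc (Δ₁ x) (Δ₂ x)) :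
    y ^ (c - 1) ≤ g c θ y ^ (1 - 1 / c) ∧
      g c θ y ^ (1 - 1 / c) ≤ (2 ^ θ) ^ (1 - 1 / c) * y ^ (c - 1) := by
  have hy₀ := pos_of_mem_Icc_Δ hy
  obtain ⟨hT₁, hT₂⟩ := tan_log_mem_Icc hy
  have hs : 0 ≤ 1 - 1 / c := sub_nonneg.2 (div_le_one_of_le₀ hc (by linarith))
  have hTθ : 0 ≤ tan (log y) ^ θ := rpow_nonneg (by linarith) θ
  have hsplit : g c θ y ^ (1 - 1 / c) = y ^ (c - 1) * (tan (log y) ^ θ) ^ (1 - 1 / c) := by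
    rw [g, mul_rpow (rpow_nonneg hy₀.le c) hTθ, ← rpow_mul hy₀.le]
    congr 2
    field_simp
  have hpos : 0 < y ^ (c - 1) := rpow_pos_of_pos hy₀ _
  rw [hsplit]
  constructor
  · exact le_mul_of_one_le_right hpos.le (one_le_rpow (one_le_rpow hT₁ hθ) hs)
  · rw [mul_comm]
    gcongr

noncomputable def gDerivLower (c θ : ℝ) : ℝ := (c + 2 * θ) / (2 ^ θ) ^ (1 - 1 / c)

noncomputable def gDerivUpper (c θ : ℝ) : ℝ := 2 ^ θ * (c + 5 * θ) * exp (c - 1)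

theorem gDerivLower_pos (hc : 0 ≤ c) (hθ : 0 < θ) : 0 < gDerivLower c θ := by
  unfold gDerivLower
  positivity

theorem gDerivLower_le_gDerivUpper (hc : 1 ≤ c) (hθ : 1 ≤ θ) :
    gDerivLower c θ ≤ gDerivUpper c θ := by
  have hs : 0 ≤ 1 - 1 / c := sub_nonneg.2 (div_le_one_of_le₀ hc (by linarith))
  obtain ⟨h₁, h₂⟩ := gDeriv_factor_bounds (zero_le_one.trans hc) hθ ⟨le_rfl, one_le_two⟩
  calc gDerivLower c θ ≤ c + 2 * θ :=
        div_le_self (by linarith) (one_le_rpow (one_le_rpow one_le_two (by linarith)) hs)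
    _ ≤ 2 ^ θ * (c + 5 * θ) := by simpa using h₁.trans h₂
    _ ≤ gDerivUpper c θ := le_mul_of_one_le_right (by positivity) (one_le_exp (by linarith))

theorem gDeriv_bounds_g_rpow {ξ : ℝ} (hc : 1 ≤ c) (hθ : 1 ≤ θ)
    (hy : y ∈ Icc (Δ₁ x) (Δ₂ x)) (hξ : ξ ∈ Icc (Δ₁ x) (Δ₂ x)) (hyξ : y ≤ ξ) :
    gDerivLower c θ * g c θ y ^ (1 - 1 / c) ≤ gDeriv c θ ξ ∧
      gDeriv c θ ξ ≤ gDerivUpper c θ * g c θ y ^ (1 - 1 / c) := by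
  have hy₀ := pos_of_mem_Icc_Δ hy
  obtain ⟨hlo, hhi⟩ := gDeriv_bounds (zero_le_one.trans hc) hθ hξ
  obtain ⟨hgy₁, hgy₂⟩ := g_rpow_bounds hc (zero_le_one.trans hθ) hy
  have hξ_le : ξ ≤ exp 1 * y :=
    hξ.2.trans (Δ₂_le_exp_one_mul_Δ₁.trans (by gcongr; exact hy.1))
  have hξ₀ : 0 ≤ ξ := hy₀.le.trans hyξ
  constructor
  · calc gDerivLower c θ * g c θ y ^ (1 - 1 / c)
        ≤ (c + 2 * θ) * y ^ (c - 1) := by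
          rw [gDerivLower, div_mul_eq_mul_div, mul_div_assoc]
          gcongr
          rw [div_le_iff₀ (by positivity), mul_comm]
          exact hgy₂
      _ ≤ (c + 2 * θ) * ξ ^ (c - 1) := by gcongr
      _ ≤ gDeriv c θ ξ := hlo
  · calc gDeriv c θ ξ ≤ 2 ^ θ * (c + 5 * θ) * ξ ^ (c - 1) := hhi
      _ ≤ 2 ^ θ * (c + 5 * θ) * (exp 1 * y) ^ (c - 1) := by gcongr
      _ = gDerivUpper c θ * y ^ (c - 1) := by
          rw [gDerivUpper, mul_rpow (exp_pos 1).le hy₀.le, exp_one_rpow]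
          ring
      _ ≤ gDerivUpper c θ * g c θ y ^ (1 - 1 / c) := by
          unfold gDerivUpper
          gcongr

end Window

theorem stmt_7_general (c θ : ℝ) (hc₁ : 1 < c) (hθ : 1 < θ)
    (m : ℝ → ℝ → ℝ)
    (hm : ∀ x : ℝ, 2 ≤ x → ∀ t ∈ Set.Icc (g c θ (Δ₁ x)) (g c θ (Δ₂ x)),
      m x t ∈ Set.Icc (Δ₁ x) (Δ₂ x) ∧ g c θ (m x t) = t) :
    ∃ c₁ c₂ : ℝ, 0 < c₁ ∧ c₁ ≤ c₂ ∧
      ∀ x : ℝ, 2 ≤ x → ∀ t : ℝ, g c θ (Δ₁ x) ≤ t → t + 1 ≤ g c θ (Δ₂ x) →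
        c₁ * t ^ (1 / c - 1) ≤ m x (t + 1) - m x t ∧
          m x (t + 1) - m x t ≤ c₂ * t ^ (1 / c - 1) := by
  have hL : 0 < gDerivLower c θ := gDerivLower_pos (by linarith) (by linarith)
  have hLU := gDerivLower_le_gDerivUpper hc₁.le hθ.le
  refine ⟨(gDerivUpper c θ)⁻¹, (gDerivLower c θ)⁻¹, inv_pos.2 (hL.trans_le hLU),
    inv_anti₀ hL hLU, ?_⟩
  intro x hx t ht₁ ht₂
  obtain ⟨hy₁, hgy₁⟩ := hm x hx t ⟨ht₁, by linarith⟩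
  obtain ⟨hy₂, hgy₂⟩ := hm x hx (t + 1) ⟨by linarith, ht₂⟩
  have hD : ∀ y ∈ Icc (Δ₁ x) (Δ₂ x), 0 < gDeriv c θ y :=
    fun y hy => gDeriv_pos (by linarith) hθ.le hy
  obtain ⟨ξ, hξ, hdiff⟩ := exists_mem_Ioo_sub_eq_div_of_hasDerivAt_pos
    (fun y hy => hasDerivAt_g_of_mem hy) hD hy₁ hy₂ (by rw [hgy₁, hgy₂]; linarith)
  have hξ' : ξ ∈ Icc (Δ₁ x) (Δ₂ x) := ⟨hy₁.1.trans hξ.1.le, hξ.2.le.trans hy₂.2⟩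
  obtain ⟨hlo, hhi⟩ := gDeriv_bounds_g_rpow hc₁.le hθ.le hy₁ hξ' hξ.1.le
  have ht : 0 < t := hgy₁ ▸ g_pos hy₁
  rw [hgy₁] at hlo hhi
  rw [hdiff, hgy₁, hgy₂, add_sub_cancel_left, show 1 / c - 1 = -(1 - 1 / c) by ring,
    rpow_neg ht.le, one_div (gDeriv c θ ξ), ← mul_inv, ← mul_inv]
  exact ⟨inv_anti₀ (hD ξ hξ') hhi, inv_anti₀ (by positivity) hlo⟩

theorem stmt_7 (c θ : ℝ) (hc₁ : 1 < c) (hc₂ : c < 12 / 11) (hθ : 1 < θ)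
    (m : ℝ → ℝ → ℝ)
    (hm : ∀ x : ℝ, 2 ≤ x → ∀ t ∈ Set.Icc (g c θ (Δ₁ x)) (g c θ (Δ₂ x)),
      m x t ∈ Set.Icc (Δ₁ x) (Δ₂ x) ∧ g c θ (m x t) = t) :
    ∃ c₁ c₂ : ℝ, 0 < c₁ ∧ c₁ ≤ c₂ ∧
      ∀ x : ℝ, 2 ≤ x → ∀ t : ℝ, g c θ (Δ₁ x) ≤ t → t + 1 ≤ g c θ (Δ₂ x) →
        c₁ * t ^ (1 / c - 1) ≤ m x (t + 1) - m x t ∧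
          m x (t + 1) - m x t ≤ c₂ * t ^ (1 / c - 1) :=
  stmt_7_general c θ hc₁ hθ m hm
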